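/- arXiv:1910.10359 — 4 statements merged into one kernel-verified Lean document; each statement's English description precedes it below -/
import Mathlib

section
/- For any multigraph G on n vertices with m edges and any c ≥ 0, there exists a subgraph H of G on the same vertex set with at most c(n−1) edges such that G and H are (V(G), c)-cut-equivalent, i.e., for every cut (A, V∖A), min{c, |∂_G(A)|} = min{c, |∂_H(A)|}. (H is obtained by taking the union of c successively removed maximal spanning forests of G.) -/
open Set Relation

/-- An edge `e` crosses the vertex set `A` if exactly one of its endpoints lies in `A`. -/
def crosses {V ι : Type*} (ends : ι → V × V) (A : Set V) (e : ι) : Prop :=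
  ((ends e).1 ∈ A ∧ (ends e).2 ∉ A) ∨ ((ends e).1 ∉ A ∧ (ends e).2 ∈ A)

/-- The boundary `∂(A)`: edges of `E` with exactly one endpoint in `A`. -/
def bdry {V ι : Type*} (ends : ι → V × V) (E : Set ι) (A : Set V) : Set ι :=
  {e ∈ E | crosses ends A e}

/-- `Mincut(G, S₁, S₂)`: the minimum size of an edge cut separating `S₁` from `S₂`
(`⊤` if `S₁` and `S₂` cannot be separated). -/
noncomputable def mincut {V ι : Type*} (ends : ι → V × V) (E : Set ι)
    (S1 S2 : Set V) : ℕ∞ :=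
  sInf {n : ℕ∞ | ∃ A : Set V, S1 ⊆ A ∧ A ∩ S2 = ∅ ∧ n = ((bdry ends E A).ncard : ℕ∞)}

/-- Adjacency in the multigraph with edge set `E`. -/
def adj {V ι : Type*} (ends : ι → V × V) (E : Set ι) (a b : V) : Prop :=
  ∃ e ∈ E, ends e = (a, b) ∨ ends e = (b, a)

/-!
Remove from `E` a maximal spanning forest `F`: it has at most `n - 1` edges and meets every
nonempty cut of `E`. By induction, `E \ F` has a sparse subgraph `E''` with the same cut values
capped at `c`, and then `E'' ∪ F` has the same cut values as `E` capped at `c + 1`: a cut missed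
by `F` is empty in `E`, and a cut hit by `F` gains the same positive amount on both sides.
Components are handled as the quotient `Quot (adj ends E)`, so that `EqvGen (adj ends E)` is
reachability; a forest is grown edge by edge, and every edge it keeps merges two components.
-/

namespace Multigraph

variable {V ι : Type*} {ends : ι → V × V}

lemma adj_mono {E E' : Set ι} (h : E ⊆ E') : adj ends E ≤ adj ends E' :=
  fun _ _ ⟨e, he, hends⟩ => ⟨e, h he, hends⟩

lemma adj_ends {E : Set ι} {e : ι} (he : e ∈ E) : adj ends E (ends e).1 (ends e).2 :=
  ⟨e, he, Or.inl rfl⟩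

lemma eqvGen_adj_le_of_forall_mem {E₁ E₂ : Set ι}
    (h : ∀ e ∈ E₁, EqvGen (adj ends E₂) (ends e).1 (ends e).2) :
    EqvGen (adj ends E₁) ≤ EqvGen (adj ends E₂) := by
  refine EqvGen.eqvGen_le fun a b ⟨e, he, hab⟩ => ?_
  have hreach := h e he
  rcases hab with hab | hab <;> rw [hab] at hreach
  exacts [hreach, hreach.symm]

lemma eqvGen_adj_insert_of_eqvGen {s : Set ι} {e : ι}
    (hconn : EqvGen (adj ends s) (ends e).1 (ends e).2) :
    EqvGen (adj ends (insert e s)) = EqvGen (adj ends s) := by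
  refine le_antisymm (eqvGen_adj_le_of_forall_mem ?_) (EqvGen.mono (adj_mono (subset_insert e s)))
  rintro f (rfl | hf)
  exacts [hconn, .rel _ _ (adj_ends hf)]

lemma eqvGen_adj_insert_mono {F s : Set ι} (e : ι)
    (h : EqvGen (adj ends F) ≤ EqvGen (adj ends s)) :
    EqvGen (adj ends (insert e F)) ≤ EqvGen (adj ends (insert e s)) := by
  refine eqvGen_adj_le_of_forall_mem ?_
  rintro f (rfl | hf)
  · exact .rel _ _ (adj_ends (mem_insert f s))
  · exact EqvGen.mono (adj_mono (subset_insert e s)) _ _ (h _ _ (.rel _ _ (adj_ends hf)))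

lemma surjective_quotMap_adj {E E' : Set ι} (h : E ⊆ E') :
    Function.Surjective (Quot.map id (adj_mono h) : Quot (adj ends E) → Quot (adj ends E')) := by
  rintro ⟨x⟩
  exact ⟨Quot.mk _ x, rfl⟩

lemma card_quot_adj_le [Finite V] {E E' : Set ι} (h : E ⊆ E') :
    Nat.card (Quot (adj ends E')) ≤ Nat.card (Quot (adj ends E)) :=
  Nat.card_le_card_of_surjective _ (surjective_quotMap_adj h)

lemma card_quot_adj_insert_lt [Finite V] {s : Set ι} {e : ι}
    (hconn : ¬EqvGen (adj ends s) (ends e).1 (ends e).2) :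
    Nat.card (Quot (adj ends (insert e s))) < Nat.card (Quot (adj ends s)) := by
  have := Fintype.ofFinite (Quot (adj ends s))
  have := Fintype.ofFinite (Quot (adj ends (insert e s)))
  simp only [Nat.card_eq_fintype_card]
  refine Fintype.card_lt_of_surjective_not_injective _ (surjective_quotMap_adj
    (subset_insert e s)) fun hinj => hconn (Quot.eqvGen_exact (hinj ?_))
  exact Quot.sound (adj_ends (mem_insert e s))

theorem exists_spanning_forest [Finite V] {E : Set ι} (hE : E.Finite) :
    ∃ F ⊆ E, EqvGen (adj ends F) = EqvGen (adj ends E) ∧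
      F.ncard + Nat.card (Quot (adj ends E)) ≤ Nat.card V := by
  induction E, hE using Set.Finite.induction_on with
  | empty =>
    refine ⟨∅, Subset.rfl, rfl, ?_⟩
    simpa using Nat.card_le_card_of_surjective _ Quot.mk_surjective
  | @insert e s hes hs ih =>
    obtain ⟨F, hFs, hreach, hcard⟩ := ih
    by_cases hconn : EqvGen (adj ends s) (ends e).1 (ends e).2
    · refine ⟨F, hFs.trans (subset_insert e s), ?_, ?_⟩
      · rw [eqvGen_adj_insert_of_eqvGen hconn, hreach]
      · exact (Nat.add_le_add_left (card_quot_adj_le (subset_insert e s)) _).trans hcard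
    · refine ⟨insert e F, insert_subset_insert hFs, le_antisymm
        (eqvGen_adj_insert_mono e hreach.le) (eqvGen_adj_insert_mono e hreach.ge), ?_⟩
      rw [ncard_insert_of_notMem (fun he => hes (hFs he)) (hs.subset hFs)]
      have := card_quot_adj_insert_lt hconn
      omega

lemma bdry_eq_empty_iff {E : Set ι} {A : Set V} :
    bdry ends E A = ∅ ↔ ∀ a b, EqvGen (adj ends E) a b → (a ∈ A ↔ b ∈ A) := by
  constructor
  · intro hA a b hab
    induction hab with
    | rel a b hab =>
      obtain ⟨e, he, hends | hends⟩ := hab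
      all_goals
        have hcross : e ∉ bdry ends E A := hA ▸ notMem_empty e
        simp only [bdry, crosses, mem_sep_iff, hends] at hcross
        tauto
    | refl => rfl
    | symm _ _ _ ih => exact ih.symm
    | trans _ _ _ _ _ ih₁ ih₂ => exact ih₁.trans ih₂
  · intro h
    refine eq_empty_of_forall_notMem fun e ⟨he, hcross⟩ => ?_
    have := h _ _ (.rel _ _ (adj_ends he))
    unfold crosses at hcross
    tauto

theorem exists_forest_hitting_cuts [Finite V] [Finite ι] (E : Set ι) :
    ∃ F ⊆ E, F.ncard ≤ Nat.card V - 1 ∧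
      ∀ A : Set V, bdry ends F A = ∅ → bdry ends E A = ∅ := by
  obtain ⟨F, hFE, hreach, hcard⟩ := exists_spanning_forest (ends := ends) E.toFinite
  refine ⟨F, hFE, ?_, fun A => by simp only [bdry_eq_empty_iff, hreach, imp_self]⟩
  rcases F.eq_empty_or_nonempty with rfl | ⟨f, -⟩
  · simp
  · have : Nonempty (Quot (adj ends E)) := ⟨Quot.mk _ (ends f).1⟩
    have := Nat.card_pos (α := Quot (adj ends E))
    omega

lemma bdry_subset (E : Set ι) (A : Set V) : bdry ends E A ⊆ E :=
  sep_subset _ _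

lemma bdry_mono {E E' : Set ι} (h : E ⊆ E') (A : Set V) : bdry ends E A ⊆ bdry ends E' A :=
  fun _ ⟨he, hcross⟩ => ⟨h he, hcross⟩

lemma bdry_union (E₁ E₂ : Set ι) (A : Set V) :
    bdry ends (E₁ ∪ E₂) A = bdry ends E₁ A ∪ bdry ends E₂ A :=
  sep_union

lemma ncard_bdry_union_of_disjoint [Finite ι] {E₁ E₂ : Set ι} (h : Disjoint E₁ E₂)
    (A : Set V) :
    (bdry ends (E₁ ∪ E₂) A).ncard = (bdry ends E₁ A).ncard + (bdry ends E₂ A).ncard :=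
  bdry_union E₁ E₂ A ▸ ncard_union_eq (h.mono (bdry_subset _ A) (bdry_subset _ A))

lemma min_ncard_bdry_union_of_hitting [Finite ι] {E F E'' : Set ι} {c : ℕ} (hFE : F ⊆ E)
    (hF : ∀ A : Set V, bdry ends F A = ∅ → bdry ends E A = ∅) (hE'' : E'' ⊆ E \ F)
    (hcut : ∀ A : Set V, min c (bdry ends (E \ F) A).ncard = min c (bdry ends E'' A).ncard)
    (A : Set V) :
    min (c + 1) (bdry ends E A).ncard = min (c + 1) (bdry ends (E'' ∪ F) A).ncard := by
  have hsplit :=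
    ncard_bdry_union_of_disjoint (ends := ends) (disjoint_sdiff_left : Disjoint (E \ F) F) A
  rw [sdiff_union_of_subset hFE] at hsplit
  rw [hsplit, ncard_bdry_union_of_disjoint (disjoint_sdiff_left.mono_left hE'')]
  have := hcut A
  rcases (bdry ends F A).eq_empty_or_nonempty with hFA | hFA
  · have hEA := hF A hFA
    have hdiff : bdry ends (E \ F) A = ∅ := subset_empty_iff.mp (hEA ▸ bdry_mono sdiff_subset A)
    have hE''A : bdry ends E'' A = ∅ :=
      subset_empty_iff.mp (hEA ▸ bdry_mono (hE''.trans sdiff_subset) A)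
    simp [hFA, hdiff, hE''A]
  · have := (ncard_pos (toFinite _)).mpr hFA
    omega

end Multigraph

open Multigraph

theorem exists_sparse_cut_equivalent_general {V ι : Type*} [Finite V] [Finite ι]
    (ends : ι → V × V) (E : Set ι) (c : ℕ) :
    ∃ E' ⊆ E, E'.ncard ≤ c * (Nat.card V - 1) ∧
      ∀ A : Set V, min c (bdry ends E A).ncard = min c (bdry ends E' A).ncard := by
  induction c generalizing E with
  | zero => exact ⟨∅, empty_subset E, by simp, fun A => by simp⟩
  | succ c ih =>
    obtain ⟨F, hFE, hFcard, hF⟩ := exists_forest_hitting_cuts (ends := ends) E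
    obtain ⟨E'', hE''sub, hE''card, hE''cut⟩ := ih (E \ F)
    refine ⟨E'' ∪ F, union_subset (hE''sub.trans sdiff_subset) hFE, ?_,
      min_ncard_bdry_union_of_hitting hFE hF hE''sub hE''cut⟩
    calc (E'' ∪ F).ncard ≤ E''.ncard + F.ncard := ncard_union_le _ _
      _ ≤ c * (Nat.card V - 1) + (Nat.card V - 1) := add_le_add hE''card hFcard
      _ = (c + 1) * (Nat.card V - 1) := by ring

/-- sparsification, Nagamochi–Ibaraki style: for any multigraph `G` on
`n` vertices and any `c ≥ 0`, there is a sub-edge-set `E' ⊆ E` with `|E'| ≤ c(n-1)` such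
that every cut value, capped at `c`, is the same in `G` and in the subgraph `H = (V, E')`. -/
theorem exists_sparse_cut_equivalent {V ι : Type*} [Finite V] [Finite ι] [Nonempty V]
    (ends : ι → V × V) (E : Set ι) (c : ℕ) :
    ∃ E' ⊆ E, E'.ncard ≤ c * (Nat.card V - 1) ∧
      ∀ A : Set V, min c (bdry ends E A).ncard = min c (bdry ends E' A).ncard :=
  exists_sparse_cut_equivalent_general ends E c
end

section
/- Let G = (V, E) be a connected multigraph with terminal set S, and suppose F ⊆ E contains all (S, c)-cuts. Then the contracted graph H = G/(E ∖ F) is (S, c)-cut-equivalent to G and has at most |F| + 1 vertices. -/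
/-!
A cut `A` of `G` whose boundary lies in `F` is a union of classes of the contraction
`G/(E ∖ F)`, so it survives as a cut of `H` with the same boundary; conversely every cut of `H`
pulls back to a cut of `G` with the same boundary. Hence min-cuts never decrease under
contraction, and those of value at most `c` are preserved because `F` contains one of them.
Since contracting `E ∖ F` keeps `G` connected, `H` is a connected multigraph with edge set `F`,
so it has at most `|F| + 1` vertices.
-/

open Set Relation

/-- Two multigraphs `G` (on vertices `V`, edges `EG`) and `H` (on `W`, edges `EH`), both
containing the terminals `T` via the maps `tG`, `tH`, are `(S, c)`-cut-equivalent if for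
every partition of the terminals, the min-cut values between the two sides, capped at `c`,
agree in `G` and `H`. -/
def CutEquiv {V W ι κ T : Type*} (endsG : ι → V × V) (EG : Set ι) (tG : T → V)
    (endsH : κ → W × W) (EH : Set κ) (tH : T → W) (c : ℕ) : Prop :=
  ∀ P : T → Prop,
    min (c : ℕ∞) (mincut endsG EG (tG '' {t | P t}) (tG '' {t | ¬ P t})) =
    min (c : ℕ∞) (mincut endsH EH (tH '' {t | P t}) (tH '' {t | ¬ P t}))

/-- `F` contains all `(S, c)`-cuts: for every partition `S = S₁ ⊎ S₂` whose min-cut value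
`ĉ` is at most `c`, some subset of `F` of size `ĉ` is an edge cut separating `S₁`
from `S₂`. -/
def ContainsCuts {V ι : Type*} (ends : ι → V × V) (E F : Set ι) (S : Set V) (c : ℕ) : Prop :=
  ∀ S1 S2 : Set V, S1 ∪ S2 = S → Disjoint S1 S2 → mincut ends E S1 S2 ≤ (c : ℕ∞) →
    ∃ F' ⊆ F, (F'.ncard : ℕ∞) = mincut ends E S1 S2 ∧
      ∃ A : Set V, S1 ⊆ A ∧ A ∩ S2 = ∅ ∧ bdry ends E A = F'

/-- The relation on vertices identifying the endpoints of each edge in `F`. -/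
def contractRel {V ι : Type*} (ends : ι → V × V) (F : Set ι) (a b : V) : Prop :=
  ∃ e ∈ F, ends e = (a, b)

/-- The quotient map `V → V(G/F)` contracting all edges of `F`. -/
def contractMap {V ι : Type*} (ends : ι → V × V) (F : Set ι) :
    V → Quotient (Relation.EqvGen.setoid (contractRel ends F)) :=
  Quotient.mk _

section Contraction

variable {V ι : Type*} (ends : ι → V × V)

abbrev contractEnds (D : Set ι) (e : ι) :
    Quotient (EqvGen.setoid (contractRel ends D)) ×
      Quotient (EqvGen.setoid (contractRel ends D)) :=
  (contractMap ends D (ends e).1, contractMap ends D (ends e).2)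

theorem mincut_le_ncard_bdry {E : Set ι} {S1 S2 A : Set V} (h1 : S1 ⊆ A) (h2 : A ∩ S2 = ∅) :
    mincut ends E S1 S2 ≤ (bdry ends E A).ncard :=
  sInf_le ⟨A, h1, h2, rfl⟩

theorem bdry_contractEnds (E D : Set ι)
    (A : Set (Quotient (EqvGen.setoid (contractRel ends D)))) :
    bdry (contractEnds ends D) E A = bdry ends E (contractMap ends D ⁻¹' A) :=
  rfl

theorem mincut_le_mincut_contractEnds (E D : Set ι) (S1 S2 : Set V) :
    mincut ends E S1 S2 ≤
      mincut (contractEnds ends D) E (contractMap ends D '' S1) (contractMap ends D '' S2) := by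
  refine le_sInf ?_
  rintro _ ⟨A, h1, h2, rfl⟩
  rw [bdry_contractEnds]
  refine mincut_le_ncard_bdry ends (image_subset_iff.1 h1) ?_
  rw [inter_comm, ← image_eq_empty (f := contractMap ends D), image_inter_preimage, inter_comm, h2]

theorem mem_iff_of_eqvGen_contractRel {D : Set ι} {A : Set V}
    (hA : ∀ e ∈ D, ¬ crosses ends A e) {u v : V} (h : EqvGen (contractRel ends D) u v) :
    u ∈ A ↔ v ∈ A := by
  induction h with
  | rel u v huv =>
    obtain ⟨e, he, hends⟩ := huv
    have := hA e he
    rw [crosses, hends] at this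
    tauto
  | refl => rfl
  | symm _ _ _ ih => exact ih.symm
  | trans _ _ _ _ _ ih₁ ih₂ => exact ih₁.trans ih₂

theorem preimage_contractMap_image {D : Set ι} {A : Set V}
    (hA : ∀ e ∈ D, ¬ crosses ends A e) :
    contractMap ends D ⁻¹' (contractMap ends D '' A) = A := by
  refine Subset.antisymm ?_ (subset_preimage_image _ _)
  rintro v ⟨a, ha, hav⟩
  exact (mem_iff_of_eqvGen_contractRel ends hA (Quotient.exact hav)).1 ha

theorem mincut_contractEnds_le_ncard_bdry {E D : Set ι} {S1 S2 A : Set V} (h1 : S1 ⊆ A)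
    (h2 : A ∩ S2 = ∅) (hA : ∀ e ∈ D, ¬ crosses ends A e) :
    mincut (contractEnds ends D) E (contractMap ends D '' S1) (contractMap ends D '' S2) ≤
      (bdry ends E A).ncard := by
  have hsat := preimage_contractMap_image ends hA
  have hsep : contractMap ends D '' A ∩ contractMap ends D '' S2 = ∅ := by
    rw [inter_comm, ← image_inter_preimage, hsat, inter_comm, h2, image_empty]
  calc _ ≤ ((bdry (contractEnds ends D) E (contractMap ends D '' A)).ncard : ℕ∞) :=
        mincut_le_ncard_bdry _ (image_mono h1) hsep
    _ = (bdry ends E A).ncard := by rw [bdry_contractEnds, hsat]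

theorem min_mincut_contractEnds_eq {E F : Set ι} {S : Set V} {c : ℕ}
    (hcontain : ContainsCuts ends E F S c) {S1 S2 : Set V} (hS : S1 ∪ S2 = S)
    (hdisj : Disjoint S1 S2) :
    min (c : ℕ∞) (mincut ends E S1 S2) =
      min (c : ℕ∞) (mincut (contractEnds ends (E \ F)) E
        (contractMap ends (E \ F) '' S1) (contractMap ends (E \ F) '' S2)) := by
  have hle := mincut_le_mincut_contractEnds ends E (E \ F) S1 S2
  by_cases hc : mincut ends E S1 S2 ≤ c
  · obtain ⟨F', hF'F, hcard, A, h1, h2, hbdry⟩ := hcontain S1 S2 hS hdisj hc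
    have hA : ∀ e ∈ E \ F, ¬ crosses ends A e := fun e he hcr =>
      he.2 (hF'F (hbdry ▸ ⟨he.1, hcr⟩))
    have hge := mincut_contractEnds_le_ncard_bdry ends (E := E) h1 h2 hA
    rw [hbdry, hcard] at hge
    rw [le_antisymm hge hle]
  · have hc := (not_le.1 hc).le
    rw [min_eq_left hc, min_eq_left (hc.trans hle)]

theorem cutEquiv_contractEnds {E F : Set ι} {S : Set V} {c : ℕ}
    (hcontain : ContainsCuts ends E F S c) :
    CutEquiv ends E (fun t : S => (t : V)) (contractEnds ends (E \ F)) E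
      (fun t : S => contractMap ends (E \ F) t) c := by
  intro P
  rw [← image_image (contractMap ends (E \ F)) Subtype.val,
    ← image_image (contractMap ends (E \ F)) Subtype.val]
  refine min_mincut_contractEnds_eq ends hcontain ?_ ?_
  · rw [← image_union, ← compl_ofPred, union_compl_self, image_univ, Subtype.range_coe]
  · exact (disjoint_image_iff Subtype.val_injective).2 disjoint_compl_right

theorem reflTransGen_adj_contractEnds {E : Set ι} (hconn : ∀ a b, ReflTransGen (adj ends E) a b)
    (F : Set ι) (x y : Quotient (EqvGen.setoid (contractRel ends (E \ F)))) :
    ReflTransGen (adj (contractEnds ends (E \ F)) F) x y := by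
  induction x using Quotient.ind with | _ a
  induction y using Quotient.ind with | _ b
  refine ReflTransGen.lift' (contractMap ends (E \ F)) ?_ _ _ (hconn a b)
  rintro u v ⟨e, he, hends⟩
  by_cases heF : e ∈ F
  · exact .single ⟨e, heF, by rcases hends with h | h <;> simp [h]⟩
  · have huv : EqvGen (contractRel ends (E \ F)) u v := by
      rcases hends with h | h
      · exact .rel _ _ ⟨e, ⟨he, heF⟩, h⟩
      · exact .symm _ _ (.rel _ _ ⟨e, ⟨he, heF⟩, h⟩)
    change ReflTransGen _ (contractMap ends (E \ F) u) _
    rw [show contractMap ends (E \ F) u = contractMap ends (E \ F) v from Quotient.sound huv]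

end Contraction

theorem card_le_ncard_add_one_of_reflTransGen_adj {W κ : Type*} (f : κ → W × W) {F : Set κ}
    (hF : F.Finite) (hconn : ∀ a b, ReflTransGen (adj f F) a b) :
    Nat.card W ≤ F.ncard + 1 := by
  rcases isEmpty_or_nonempty W with hW | hW
  · simp
  let G := SimpleGraph.fromEdgeSet ((fun e => s((f e).1, (f e).2)) '' F)
  have hG : G.Connected := by
    refine (SimpleGraph.connected_iff G).2 ⟨fun a b => ?_, hW⟩
    refine (SimpleGraph.reachable_iff_reflTransGen a b).2 ?_
    refine ReflTransGen.lift' id ?_ _ _ (hconn a b)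
    rintro u v ⟨e, he, hends⟩
    by_cases huv : u = v
    · rw [huv]
    refine .single ((SimpleGraph.fromEdgeSet_adj _).2 ⟨⟨e, he, ?_⟩, huv⟩)
    rcases hends with h | h <;> simp [h, Sym2.eq_swap]
  have hedges : Nat.card G.edgeSet ≤ F.ncard := by
    rw [Nat.card_coe_set_eq, SimpleGraph.edgeSet_fromEdgeSet]
    exact (ncard_le_ncard sdiff_subset (hF.image _)).trans (ncard_image_le hF)
  exact hG.card_vert_le_card_edgeSet_add_one.trans (by omega)

theorem contract_containing_edges_general {V ι : Type*} [Finite ι]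
    (ends : ι → V × V) (E : Set ι) (S : Set V) (c : ℕ) (F : Set ι)
    (hconn : ∀ a b : V, Relation.ReflTransGen (adj ends E) a b)
    (hcontain : ContainsCuts ends E F S c) :
    CutEquiv ends E (fun t : ↥S => (t : V))
      (fun e => (contractMap ends (E \ F) (ends e).1, contractMap ends (E \ F) (ends e).2))
      E (fun t : ↥S => contractMap ends (E \ F) (t : V)) c ∧
    Nat.card (Quotient (Relation.EqvGen.setoid (contractRel ends (E \ F)))) ≤
      F.ncard + 1 :=
  ⟨cutEquiv_contractEnds ends hcontain,
    card_le_ncard_add_one_of_reflTransGen_adj _ F.toFinite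
      (reflTransGen_adj_contractEnds ends hconn F)⟩

/-- if `G` is a connected multigraph with terminals `S` and `F ⊆ E`
contains all `(S, c)`-cuts, then the contraction `H = G/(E ∖ F)` is `(S, c)`-cut-equivalent
to `G` and has at most `|F| + 1` vertices. -/
theorem contract_containing_edges {V ι : Type*} [Finite V] [Finite ι]
    (ends : ι → V × V) (E : Set ι) (S : Set V) (c : ℕ) (F : Set ι) (hFE : F ⊆ E)
    (hconn : ∀ a b : V, Relation.ReflTransGen (adj ends E) a b)
    (hcontain : ContainsCuts ends E F S c) :
    CutEquiv ends E (fun t : ↥S => (t : V))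
      (fun e => (contractMap ends (E \ F) (ends e).1, contractMap ends (E \ F) (ends e).2))
      E (fun t : ↥S => contractMap ends (E \ F) (t : V)) c ∧
    Nat.card (Quotient (Relation.EqvGen.setoid (contractRel ends (E \ F)))) ≤
      F.ncard + 1 :=
  contract_containing_edges_general ends E S c F hconn hcontain
end

section
/- Let G be a connected multigraph with terminal set S, |S| ≥ 4, such that every vertex of G contains at least one terminal class after contracting all non-cut edges of a minimum terminal cut, and suppose G is a multistar: a center vertex r adjacent (possibly with multiedges) to leaf vertices, each leaf containing exactly one terminal. Then for any partition S = S₁ ⊎ S₂ realized by a cut whose edge set is E(G), the union of the minimum isolating cuts of the individual leaf terminals realizes every minimum (S₁, S₂)-cut of the same size. -/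
open Set Relation

/-!
Since every vertex is a terminal, a cut separating a bipartition `S₁ ⊎ S₂` of the vertices
must have `S₁` itself as one side, so the minimum `(S₁, S₂)`-cut is `∂(S₁)`; in particular a
leaf's isolating cut is its star. As the center lies in `S₂`, no edge has both ends in `S₁`,
and then each edge of `∂(S₁)` leaves exactly one vertex of `S₁`: `∂(S₁)` is the union of the
stars of the `S₁`-leaves.
-/

theorem mincut_eq_ncard_bdry_of_isCompl {V ι : Type*} (ends : ι → V × V) (E : Set ι)
    {S1 S2 : Set V} (h : IsCompl S1 S2) :
    mincut ends E S1 S2 = ((bdry ends E S1).ncard : ℕ∞) := by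
  have hcuts : {n : ℕ∞ | ∃ A : Set V, S1 ⊆ A ∧ A ∩ S2 = ∅ ∧
      n = ((bdry ends E A).ncard : ℕ∞)} = {((bdry ends E S1).ncard : ℕ∞)} := by
    ext n
    constructor
    · rintro ⟨A, hS1A, hAS2, rfl⟩
      have hAS1 : A ⊆ S1 := by
        rw [← h.symm.compl_eq, subset_compl_iff_disjoint_right]
        exact disjoint_iff_inter_eq_empty.mpr hAS2
      rw [hS1A.antisymm hAS1]
      rfl
    · rintro rfl
      exact ⟨S1, subset_rfl, disjoint_iff_inter_eq_empty.mp h.disjoint, rfl⟩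
  rw [mincut, hcuts, sInf_singleton]

theorem bdry_eq_biUnion_bdry_singleton {V ι : Type*} (ends : ι → V × V) (E : Set ι)
    (A : Set V) (hA : ∀ e ∈ E, ¬((ends e).1 ∈ A ∧ (ends e).2 ∈ A)) :
    bdry ends E A = ⋃ v ∈ A, bdry ends E {v} := by
  ext e
  simp only [bdry, crosses, mem_ofPred_eq, mem_iUnion, mem_singleton_iff, exists_prop]
  constructor
  · rintro ⟨he, ⟨h1, h2⟩ | ⟨h1, h2⟩⟩
    · exact ⟨_, h1, he, Or.inl ⟨rfl, fun h => h2 (h ▸ h1)⟩⟩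
    · exact ⟨_, h2, he, Or.inr ⟨fun h => h1 (h ▸ h2), rfl⟩⟩
  · rintro ⟨v, hv, he, ⟨rfl, -⟩ | ⟨-, rfl⟩⟩
    · exact ⟨he, Or.inl ⟨hv, fun h2 => hA e he ⟨hv, h2⟩⟩⟩
    · exact ⟨he, Or.inr ⟨fun h1 => hA e he ⟨h1, hv⟩, hv⟩⟩

theorem star_cut_is_union_of_isolating_cuts_general {L ι : Type*}
    (ends : ι → Option L × Option L) (E : Set ι)
    (hstar : ∀ e ∈ E, ((ends e).1 = none ∧ (ends e).2 ≠ none) ∨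
      ((ends e).2 = none ∧ (ends e).1 ≠ none))
    (S1 S2 : Set (Option L)) (hpart : S1 ∪ S2 = Set.univ) (hdisj : Disjoint S1 S2)
    (hcenter : (none : Option L) ∈ S2) :
    (∀ ℓ : L, some ℓ ∈ S1 →
      ((bdry ends E {some ℓ}).ncard : ℕ∞) =
        mincut ends E {some ℓ} (Set.univ \ {some ℓ})) ∧
    bdry ends E S1 = ⋃ ℓ ∈ {ℓ : L | some ℓ ∈ S1}, bdry ends E {some ℓ} ∧
    mincut ends E S1 S2 = ((bdry ends E S1).ncard : ℕ∞) := by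
  have hnone : (none : Option L) ∉ S1 := disjoint_right.mp hdisj hcenter
  have hS1_indep : ∀ e ∈ E, ¬((ends e).1 ∈ S1 ∧ (ends e).2 ∈ S1) := by
    rintro e he ⟨h1, h2⟩
    rcases hstar e he with ⟨hc, -⟩ | ⟨hc, -⟩
    · exact hnone (hc ▸ h1)
    · exact hnone (hc ▸ h2)
  have hS1_leaves : some '' {ℓ : L | some ℓ ∈ S1} = S1 := by
    refine image_preimage_eq_of_subset fun v hv => ?_
    cases v with
    | none => exact absurd hv hnone
    | some ℓ => exact mem_range_self ℓ
  refine ⟨fun ℓ _ => ?_, ?_, mincut_eq_ncard_bdry_of_isCompl ends E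
    ⟨hdisj, codisjoint_iff.mpr hpart⟩⟩
  · rw [← compl_eq_univ_sdiff, mincut_eq_ncard_bdry_of_isCompl ends E isCompl_compl]
  · conv_lhs => rw [bdry_eq_biUnion_bdry_singleton ends E S1 hS1_indep, ← hS1_leaves]
    exact biUnion_image

/-- star case of the isolating-cut lemma: let `G` be a multistar on
vertex set `Option L` (center `none`, leaves `some ℓ`, every edge joining the center to a
leaf, possibly with multiplicity), with every vertex a terminal (each leaf holding exactly
one terminal, the center possibly several) and at least `4` terminals.  Then for any
partition of the terminals `S₁ ⊎ S₂ = V` with the center on the `S₂` side, the boundary of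
each `S₁`-leaf is a minimum cut isolating that leaf-terminal, the boundary `∂(S₁)` is
exactly the union of these minimum leaf-isolating cuts, and this union realizes the
minimum `(S₁, S₂)`-cut, having the same size. -/
theorem star_cut_is_union_of_isolating_cuts {L ι : Type*} [Finite L] [Finite ι]
    (ends : ι → Option L × Option L) (E : Set ι)
    (hstar : ∀ e ∈ E, ((ends e).1 = none ∧ (ends e).2 ≠ none) ∨
      ((ends e).2 = none ∧ (ends e).1 ≠ none))
    (hS : 4 ≤ Nat.card (Option L))
    (S1 S2 : Set (Option L)) (hpart : S1 ∪ S2 = Set.univ) (hdisj : Disjoint S1 S2)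
    (hcenter : (none : Option L) ∈ S2) :
    (∀ ℓ : L, some ℓ ∈ S1 →
      ((bdry ends E {some ℓ}).ncard : ℕ∞) =
        mincut ends E {some ℓ} (Set.univ \ {some ℓ})) ∧
    bdry ends E S1 = ⋃ ℓ ∈ {ℓ : L | some ℓ ∈ S1}, bdry ends E {some ℓ} ∧
    mincut ends E S1 S2 = ((bdry ends E S1).ncard : ℕ∞) :=
  star_cut_is_union_of_isolating_cuts_general ends E hstar S1 S2 hpart hdisj hcenter
end

section
/- Let T be a tree on at least 3 vertices in which every vertex contains at least one terminal (a weight function w: V(T) → ℕ with w(v) ≥ 1 for all v, and total weight |S| ≥ 4), such that deleting any edge of T yields two components each of total weight ≤ 1 on at least one side (no edge deletion gives both sides weight ≥ 2). Then T is a star: there is a center r such that every other vertex is a leaf adjacent to r with weight exactly 1. -/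
/-!
Every vertex has weight at least `1`, so a side of weight at most `1` consists of a single vertex of
weight `1`. Hence every edge has a weight-`1` endpoint whose only neighbour is the other
endpoint. A tree on at least three vertices has a vertex `r` with two distinct neighbours; `r`
is then not such a leaf, so all neighbours of `r` are weight-`1` leaves, and by connectedness
there are no other vertices.
-/

theorem eq_singleton_of_finsum_mem_le_one {V : Type*} [Finite V] {w : V → ℕ}
    (hw : ∀ v, 1 ≤ w v) {s : Set V} {a : V} (ha : a ∈ s) (hs : ∑ᶠ v ∈ s, w v ≤ 1) :
    s = {a} ∧ w a = 1 := by
  classical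
  have := Fintype.ofFinite V
  rw [finsum_mem_eq_toFinset_sum, ← Finset.add_sum_erase _ _ (Set.mem_toFinset.2 ha)] at hs
  have hwa := hw a
  have hrest : ∑ v ∈ s.toFinset.erase a, w v = 0 := by lia
  rw [Finset.sum_eq_zero_iff] at hrest
  refine ⟨Set.eq_singleton_iff_unique_mem.2 ⟨ha, fun u hu => by_contra fun hua => ?_⟩, by lia⟩
  have := hrest u (by simpa [hua] using hu)
  have := hw u
  lia

namespace SimpleGraph

variable {V : Type*} {G : SimpleGraph V}

theorem Reachable.mem_of_forall_adj_mem {s : Set V} (hs : ∀ u v, G.Adj u v → u ∈ s → v ∈ s)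
    {a b : V} (hab : G.Reachable a b) (ha : a ∈ s) : b ∈ s := by
  obtain ⟨p⟩ := hab
  induction p with
  | nil => exact ha
  | cons h _ ih => exact ih (hs _ _ h ha)

theorem Preconnected.eq_or_adj_of_forall_adj_adj_eq (hG : G.Preconnected) {r : V}
    (h : ∀ u v, G.Adj r u → G.Adj u v → v = r) (v : V) : v = r ∨ G.Adj r v := by
  refine (hG r v).mem_of_forall_adj_mem (s := {v | v = r ∨ G.Adj r v}) ?_ (Or.inl rfl)
  rintro u v huv (rfl | hru)
  · exact Or.inr huv
  · exact Or.inl (h u v hru huv)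

theorem Preconnected.exists_adj_adj_of_three_le_card [Fintype V] (hG : G.Preconnected)
    (h3 : 3 ≤ Fintype.card V) : ∃ r u₁ u₂, u₁ ≠ u₂ ∧ G.Adj r u₁ ∧ G.Adj r u₂ := by
  by_contra! hdeg
  obtain ⟨x, y, z, hxy, hxz, hyz⟩ := Fintype.two_lt_card_iff.1 h3
  have hstar := hG.eq_or_adj_of_forall_adj_adj_eq (r := x) fun u v hxu huv =>
    by_contra fun hvx => hdeg u x v (Ne.symm hvx) hxu.symm huv
  exact hdeg x y z hyz ((hstar y).resolve_left hxy.symm) ((hstar z).resolve_left hxz.symm)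

theorem Adj.weight_eq_one_and_unique_adj_of_finsum_side_le_one [Finite V] {w : V → ℕ}
    (hw : ∀ v, 1 ≤ w v) {a b : V} (hab : G.Adj a b)
    (hside : ∑ᶠ v ∈ {v | (G.deleteEdges {s(a, b)}).Reachable a v}, w v ≤ 1) :
    w a = 1 ∧ ∀ u, G.Adj a u → u = b := by
  obtain ⟨hsingle, hwa⟩ := eq_singleton_of_finsum_mem_le_one hw (Reachable.refl a) hside
  refine ⟨hwa, fun u hau => by_contra fun hub => ?_⟩
  have hdel : (G.deleteEdges {s(a, b)}).Adj a u := by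
    simp [hau, hub, hab.ne]
  have hua : u ∈ ({a} : Set V) := hsingle ▸ hdel.reachable
  exact hau.ne (hua : u = a).symm

end SimpleGraph

theorem tree_no_balanced_edge_is_star_general {V : Type*} [Fintype V]
    (G : SimpleGraph V) (hT : G.IsTree) (h3 : 3 ≤ Fintype.card V)
    (w : V → ℕ) (hw : ∀ v, 1 ≤ w v)
    (hno : ∀ a b : V, G.Adj a b →
      (∑ᶠ v ∈ {v | (G.deleteEdges {s(a, b)}).Reachable a v}, w v) ≤ 1 ∨
      (∑ᶠ v ∈ {v | (G.deleteEdges {s(a, b)}).Reachable b v}, w v) ≤ 1) :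
    ∃ r : V, ∀ v : V, v ≠ r → G.Adj r v ∧ w v = 1 ∧ ∀ u : V, G.Adj v u → u = r := by
  have hleaf : ∀ a b, G.Adj a b →
      (w a = 1 ∧ ∀ u, G.Adj a u → u = b) ∨ (w b = 1 ∧ ∀ u, G.Adj b u → u = a) := by
    intro a b hab
    refine (hno a b hab).imp (hab.weight_eq_one_and_unique_adj_of_finsum_side_le_one hw)
      fun h => hab.symm.weight_eq_one_and_unique_adj_of_finsum_side_le_one hw ?_
    rwa [Sym2.eq_swap]
  have hG := hT.connected.preconnected
  obtain ⟨r, u₁, u₂, hu, h₁, h₂⟩ := hG.exists_adj_adj_of_three_le_card h3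
  have hnbr : ∀ v, G.Adj r v → w v = 1 ∧ ∀ u, G.Adj v u → u = r := fun v hv =>
    (hleaf r v hv).resolve_left fun ⟨_, hr⟩ => hu ((hr u₁ h₁).trans (hr u₂ h₂).symm)
  have hstar := hG.eq_or_adj_of_forall_adj_adj_eq fun u v hru huv => (hnbr u hru).2 v huv
  exact ⟨r, fun v hvr => have hrv := (hstar v).resolve_left hvr; ⟨hrv, hnbr v hrv⟩⟩

/-- tree-structure lemma: let `G` be a tree on at least `3` vertices
with a vertex weight function `w` (the number of terminals at each vertex) satisfying
`w v ≥ 1` for all `v` and total weight at least `4`.  Suppose that deleting any edge of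
the tree leaves total weight at most `1` on at least one of the two resulting components
(no edge splits the weight `≥ 2` / `≥ 2`).  Then the tree is a star: there is a center `r`
such that every other vertex is a leaf (its unique neighbour is `r`) adjacent to `r`
of weight exactly `1`. -/
theorem tree_no_balanced_edge_is_star {V : Type*} [Fintype V]
    (G : SimpleGraph V) (hT : G.IsTree) (h3 : 3 ≤ Fintype.card V)
    (w : V → ℕ) (hw : ∀ v, 1 ≤ w v) (hsum : 4 ≤ ∑ᶠ v, w v)
    (hno : ∀ a b : V, G.Adj a b →
      (∑ᶠ v ∈ {v | (G.deleteEdges {s(a, b)}).Reachable a v}, w v) ≤ 1 ∨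
      (∑ᶠ v ∈ {v | (G.deleteEdges {s(a, b)}).Reachable b v}, w v) ≤ 1) :
    ∃ r : V, ∀ v : V, v ≠ r → G.Adj r v ∧ w v = 1 ∧ ∀ u : V, G.Adj v u → u = r :=
  tree_no_balanced_edge_is_star_general G hT h3 w hw hno
end
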